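/- arXiv:1312.5148 — 3 statements merged into one kernel-verified Lean document; each statement's English description precedes it below -/
import Mathlib

section
/- Nearest neighbors of the virtual object minimize the post-exchange truncated team distance: for a fixed swap-out object R, if P* minimizes the truncated object distance oDis~(V, P) = sqrt(Σᵢ (wᵢ · max(vᵢ − pᵢ, 0))²) over a finite set of objects 𝕆, then P* also minimizes the post-exchange truncated team-to-target distance D(P) = sqrt(Σᵢ (wᵢ · max(tᵢ − (cᵢ − rᵢ + λ_r·pᵢ), 0))²) over 𝕆, provided all weak-dimension identities hold (tᵢ − (cᵢ − rᵢ + λ_r·pᵢ) = λ_r·(vᵢ − pᵢ) on weak dimensions and cᵢ − rᵢ + λ_r·pᵢ ≥ tᵢ is not required on strong dimensions where additionally pᵢ ≥ 0 and cᵢ − rᵢ ≥ tᵢ). -/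
/-! On a weak dimension the post-exchange gap `tᵢ - (cᵢ - rᵢ + λ pᵢ)` is exactly `λ (vᵢ - pᵢ)`, and on
a strong dimension both gaps are nonpositive (as `pᵢ ≥ 0` and `cᵢ - rᵢ ≥ tᵢ`). Hence the post-exchange
distance is `λ` times the truncated distance to the virtual object, and the two have the same
minimizers. -/

lemma max_exchange_gap_eq_mul {C T R p lr : ℝ} (hlr : 0 < lr) (hp : 0 ≤ p)
    (hstrong : T - C < 0 → C - R ≥ T) :
    max (T - (C - R + lr * p)) 0 =
      lr * max ((if T - C ≥ 0 then ((T - C) + R) / lr else 0) - p) 0 := by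
  split_ifs with hweak
  · have hgap : T - (C - R + lr * p) = lr * ((T - C + R) / lr - p) := by
      field_simp; ring
    rw [hgap, mul_max_of_nonneg _ _ hlr.le, mul_zero]
  · have hCR := hstrong (not_le.mp hweak)
    rw [max_eq_right (by nlinarith), max_eq_right (by linarith), mul_zero]

lemma sqrt_sum_sq_mul_const_mul {ι : Type*} [Fintype ι] (w f : ι → ℝ) {c : ℝ} (hc : 0 ≤ c) :
    √(∑ i, (w i * (c * f i)) ^ 2) = c * √(∑ i, (w i * f i) ^ 2) := by
  have hsum : ∑ i, (w i * (c * f i)) ^ 2 = c ^ 2 * ∑ i, (w i * f i) ^ 2 := by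
    rw [Finset.mul_sum]
    exact Finset.sum_congr rfl fun i _ => by ring
  rw [hsum, Real.sqrt_mul (sq_nonneg c), Real.sqrt_sq hc]

theorem rtc_star_nearest_neighbor_minimizes_general
    (d : ℕ) (C T R V w : Fin d → ℝ) (lr : ℝ) (hlr : lr > 0)
    (hV : ∀ i, V i = if T i - C i ≥ 0 then ((T i - C i) + R i) / lr else 0)
    (𝕆 : Finset (Fin d → ℝ))
    (hP : ∀ P ∈ 𝕆, ∀ i, P i ≥ 0)
    (hstrong : ∀ i, T i - C i < 0 → C i - R i ≥ T i)
    (Pstar : Fin d → ℝ) (hPstar : Pstar ∈ 𝕆)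
    (hmin : ∀ P ∈ 𝕆,
      Real.sqrt (∑ i, (w i * max (V i - Pstar i) 0) ^ 2) ≤
        Real.sqrt (∑ i, (w i * max (V i - P i) 0) ^ 2)) :
    ∀ P ∈ 𝕆,
      Real.sqrt (∑ i, (w i * max (T i - (C i - R i + lr * Pstar i)) 0) ^ 2) ≤
        Real.sqrt (∑ i, (w i * max (T i - (C i - R i + lr * P i)) 0) ^ 2) := by
  have hgap : ∀ Q ∈ 𝕆, ∀ i, max (T i - (C i - R i + lr * Q i)) 0 = lr * max (V i - Q i) 0 :=
    fun Q hQ i => by rw [hV i]; exact max_exchange_gap_eq_mul hlr (hP Q hQ i) (hstrong i)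
  have hdist : ∀ Q ∈ 𝕆, √(∑ i, (w i * max (T i - (C i - R i + lr * Q i)) 0) ^ 2) =
      lr * √(∑ i, (w i * max (V i - Q i) 0) ^ 2) := fun Q hQ => by
    simp_rw [hgap Q hQ]
    exact sqrt_sum_sq_mul_const_mul w _ hlr.le
  intro P hPmem
  rw [hdist P hPmem, hdist Pstar hPstar]
  exact mul_le_mul_of_nonneg_left (hmin P hPmem) hlr.le

theorem rtc_star_nearest_neighbor_minimizes
    (d : ℕ) (C T R V w : Fin d → ℝ) (lr : ℝ) (hlr : lr > 0)
    (hw : ∀ i, w i > 0)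
    (hV : ∀ i, V i = if T i - C i ≥ 0 then ((T i - C i) + R i) / lr else 0)
    (𝕆 : Finset (Fin d → ℝ)) (h𝕆 : 𝕆.Nonempty)
    (hP : ∀ P ∈ 𝕆, ∀ i, P i ≥ 0)
    (hstrong : ∀ i, T i - C i < 0 → C i - R i ≥ T i)
    (Pstar : Fin d → ℝ) (hPstar : Pstar ∈ 𝕆)
    (hmin : ∀ P ∈ 𝕆,
      Real.sqrt (∑ i, (w i * max (V i - Pstar i) 0) ^ 2) ≤
        Real.sqrt (∑ i, (w i * max (V i - P i) 0) ^ 2)) :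
    ∀ P ∈ 𝕆,
      Real.sqrt (∑ i, (w i * max (T i - (C i - R i + lr * Pstar i)) 0) ^ 2) ≤
        Real.sqrt (∑ i, (w i * max (T i - (C i - R i + lr * P i)) 0) ^ 2) :=
  rtc_star_nearest_neighbor_minimizes_general d C T R V w lr hlr hV 𝕆 hP hstrong Pstar hPstar hmin
end

section
/- Under the assumptions of the RTC* correspondence (pᵢ ≥ 0 on all dimensions, cᵢ − rᵢ ≥ tᵢ on strong dimensions, λ_r > 0), the post-exchange truncated team distance equals λ_r times the truncated object distance from V to P: sqrt(Σᵢ (wᵢ · max(tᵢ − (cᵢ − rᵢ + λ_r·pᵢ), 0))²) = λ_r · sqrt(Σᵢ (wᵢ · max(vᵢ − pᵢ, 0))²). -/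
/-! On a weak dimension the post-exchange gap `t - (c - r + λ p)` is `λ (v - p)` with
`v = (t - c + r) / λ`, and truncation at `0` commutes with scaling by `λ > 0`. On a strong
dimension `c - r ≥ t` and `p ≥ 0` make both truncated gaps vanish. Hence every weighted term of
the team distance is `λ` times the corresponding term of the object distance, and `λ` factors
out of the square root. -/

lemma max_sub_mul_zero_eq_mul_max {lr : ℝ} (hlr : 0 < lr) (x p : ℝ) :
    max (x - lr * p) 0 = lr * max (x / lr - p) 0 := by
  rw [mul_max_of_nonneg _ _ hlr.le, mul_zero, mul_sub, mul_div_cancel₀ x hlr.ne']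

lemma max_sub_sub_add_mul_zero_of_le {t c r p lr : ℝ} (htc : t ≤ c - r) (hp : 0 ≤ p)
    (hlr : 0 ≤ lr) : max (t - (c - r + lr * p)) 0 = lr * max (0 - p) 0 := by
  have hgap : t - (c - r + lr * p) ≤ 0 := by nlinarith [mul_nonneg hlr hp]
  rw [max_eq_right hgap, max_eq_right (by linarith), mul_zero]

lemma sqrt_sum_sq_mul_mul {ι : Type*} (s : Finset ι) (w x : ι → ℝ) {a : ℝ} (ha : 0 ≤ a) :
    √(∑ i ∈ s, (w i * (a * x i)) ^ 2) = a * √(∑ i ∈ s, (w i * x i) ^ 2) := by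
  have hsum : ∑ i ∈ s, (w i * (a * x i)) ^ 2 = a ^ 2 * ∑ i ∈ s, (w i * x i) ^ 2 := by
    rw [Finset.mul_sum]
    exact Finset.sum_congr rfl fun i _ => by ring
  rw [hsum, Real.sqrt_mul (sq_nonneg a), Real.sqrt_sq ha]

theorem rtc_star_distance_correspondence_general
    (d : ℕ) (C T R P V w : Fin d → ℝ) (lr : ℝ) (hlr : lr > 0)
    (hV : ∀ i, V i = if T i - C i ≥ 0 then ((T i - C i) + R i) / lr else 0)
    (hP : ∀ i, P i ≥ 0)
    (hstrong : ∀ i, T i - C i < 0 → C i - R i ≥ T i) :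
    Real.sqrt (∑ i, (w i * max (T i - (C i - R i + lr * P i)) 0) ^ 2) =
      lr * Real.sqrt (∑ i, (w i * max (V i - P i) 0) ^ 2) := by
  have hterm : ∀ i, max (T i - (C i - R i + lr * P i)) 0 = lr * max (V i - P i) 0 := by
    intro i
    rw [hV i]
    split_ifs with hweak
    · rw [← max_sub_mul_zero_eq_mul_max hlr]
      congr 1; ring
    · exact max_sub_sub_add_mul_zero_of_le (hstrong i (not_le.mp hweak)) (hP i) hlr.le
  simp_rw [hterm]
  exact sqrt_sum_sq_mul_mul _ _ _ hlr.le

theorem rtc_star_distance_correspondence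
    (d : ℕ) (C T R P V w : Fin d → ℝ) (lr : ℝ) (hlr : lr > 0)
    (hw : ∀ i, w i > 0)
    (hV : ∀ i, V i = if T i - C i ≥ 0 then ((T i - C i) + R i) / lr else 0)
    (hP : ∀ i, P i ≥ 0)
    (hstrong : ∀ i, T i - C i < 0 → C i - R i ≥ T i) :
    Real.sqrt (∑ i, (w i * max (T i - (C i - R i + lr * P i)) 0) ^ 2) =
      lr * Real.sqrt (∑ i, (w i * max (V i - P i) 0) ^ 2) :=
  rtc_star_distance_correspondence_general d C T R P V w lr hlr hV hP hstrong
end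

section
/- Scaling invariance of the RTC* ranking: for λ_r > 0, the ordering of candidate objects P by post-exchange truncated team distance is identical to their ordering by truncated object distance to the virtual object V; i.e., for any two candidates P, Q satisfying the RTC* assumptions, D(P) ≤ D(Q) iff oDis~(V,P) ≤ oDis~(V,Q), where D(P) is the post-exchange truncated team-to-target distance. -/
/-!
On a weak dimension the post-exchange gap `tᵢ - (cᵢ - rᵢ + λ_r pᵢ)` equals `λ_r (vᵢ - pᵢ)`; on a strong
dimension both truncated gaps vanish. Hence `D(P) = λ_r · oDis~(V, P)` for every admissible `P`, and
multiplying by `λ_r > 0` preserves the order.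
-/

open Finset

lemma max_mul_zero_of_nonneg {c : ℝ} (hc : 0 ≤ c) (a : ℝ) : max (c * a) 0 = c * max a 0 := by
  rw [mul_max_of_nonneg a 0 hc, mul_zero]

lemma sqrt_sum_sq_mul_max_mul {ι : Type*} [Fintype ι] (w u : ι → ℝ) {c : ℝ} (hc : 0 ≤ c) :
    Real.sqrt (∑ i, (w i * max (c * u i) 0) ^ 2) = c * Real.sqrt (∑ i, (w i * max (u i) 0) ^ 2) := by
  have hsum : ∑ i, (w i * max (c * u i) 0) ^ 2 = c ^ 2 * ∑ i, (w i * max (u i) 0) ^ 2 := by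
    rw [mul_sum]
    refine sum_congr rfl fun i _ => ?_
    rw [max_mul_zero_of_nonneg hc]
    ring
  rw [hsum, Real.sqrt_mul (sq_nonneg c), Real.sqrt_sq hc]

lemma max_exchange_gap_eq {t c r p lr : ℝ} (hlr : 0 < lr) (hp : 0 ≤ p)
    (hstrong : t - c < 0 → c - r ≥ t) :
    max (t - (c - r + lr * p)) 0 =
      max (lr * ((if t - c ≥ 0 then ((t - c) + r) / lr else 0) - p)) 0 := by
  split_ifs with hweak
  · congr 1
    field_simp
    ring
  · have hgap : t - (c - r + lr * p) ≤ 0 := by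
      nlinarith [hstrong (not_le.mp hweak), mul_nonneg hlr.le hp]
    rw [max_eq_right hgap, max_eq_right (by nlinarith)]

lemma exchange_dist_eq_mul_virtual_dist {d : ℕ} (C T R V X w : Fin d → ℝ) {lr : ℝ} (hlr : 0 < lr)
    (hV : ∀ i, V i = if T i - C i ≥ 0 then ((T i - C i) + R i) / lr else 0)
    (hX : ∀ i, 0 ≤ X i) (hstrong : ∀ i, T i - C i < 0 → C i - R i ≥ T i) :
    Real.sqrt (∑ i, (w i * max (T i - (C i - R i + lr * X i)) 0) ^ 2) =
      lr * Real.sqrt (∑ i, (w i * max (V i - X i) 0) ^ 2) := by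
  rw [← sqrt_sum_sq_mul_max_mul w (fun i => V i - X i) hlr.le]
  congr 1
  refine sum_congr rfl fun i _ => ?_
  rw [max_exchange_gap_eq hlr (hX i) (hstrong i), hV i]

theorem rtc_star_ranking_invariance_general
    (d : ℕ) (C T R V P Q w : Fin d → ℝ) (lr : ℝ) (hlr : lr > 0)
    (hV : ∀ i, V i = if T i - C i ≥ 0 then ((T i - C i) + R i) / lr else 0)
    (hP : ∀ i, P i ≥ 0) (hQ : ∀ i, Q i ≥ 0)
    (hstrong : ∀ i, T i - C i < 0 → C i - R i ≥ T i) :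
    (Real.sqrt (∑ i, (w i * max (T i - (C i - R i + lr * P i)) 0) ^ 2) ≤
        Real.sqrt (∑ i, (w i * max (T i - (C i - R i + lr * Q i)) 0) ^ 2)) ↔
      (Real.sqrt (∑ i, (w i * max (V i - P i) 0) ^ 2) ≤
        Real.sqrt (∑ i, (w i * max (V i - Q i) 0) ^ 2)) := by
  rw [exchange_dist_eq_mul_virtual_dist C T R V P w hlr hV hP hstrong,
    exchange_dist_eq_mul_virtual_dist C T R V Q w hlr hV hQ hstrong]
  exact mul_le_mul_iff_right₀ hlr

theorem rtc_star_ranking_invariance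
    (d : ℕ) (C T R V P Q w : Fin d → ℝ) (lr : ℝ) (hlr : lr > 0)
    (hw : ∀ i, w i > 0)
    (hV : ∀ i, V i = if T i - C i ≥ 0 then ((T i - C i) + R i) / lr else 0)
    (hP : ∀ i, P i ≥ 0) (hQ : ∀ i, Q i ≥ 0)
    (hstrong : ∀ i, T i - C i < 0 → C i - R i ≥ T i) :
    (Real.sqrt (∑ i, (w i * max (T i - (C i - R i + lr * P i)) 0) ^ 2) ≤
        Real.sqrt (∑ i, (w i * max (T i - (C i - R i + lr * Q i)) 0) ^ 2)) ↔
      (Real.sqrt (∑ i, (w i * max (V i - P i) 0) ^ 2) ≤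
        Real.sqrt (∑ i, (w i * max (V i - Q i) 0) ^ 2)) :=
  rtc_star_ranking_invariance_general d C T R V P Q w lr hlr hV hP hQ hstrong
end
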